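/- arXiv:2012.07468 — 2 statements merged into one kernel-verified Lean document; each statement's English description precedes it below -/
import Mathlib

section
/- Let G be a subgroup of GL_N(ℝ) and let f : ℝ^N → ℝ be a polynomial function such that f(0) = 0, f(g·v) = f(v) for all g ∈ G and v ∈ ℝ^N, and such that there is a positive integer D with f(v) ∈ (1/D)·ℤ for all v ∈ ℤ^N. Then there exists ε > 0 such that for every v ∈ ℤ^N: if ‖g·v‖ ≤ ε for some g ∈ G, then f(v) = 0. (This is the quantitative instability mechanism underlying Corollary 5.4 of the paper.) -/
theorem stmt7
    (N : ℕ) (G : Subgroup (Matrix.GeneralLinearGroup (Fin N) ℝ))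
    (p : MvPolynomial (Fin N) ℝ)
    (hp0 : MvPolynomial.eval (0 : Fin N → ℝ) p = 0)
    (hinv : ∀ g ∈ G, ∀ v : Fin N → ℝ,
      MvPolynomial.eval ((g : Matrix (Fin N) (Fin N) ℝ).mulVec v) p = MvPolynomial.eval v p)
    (D : ℕ) (hD : 0 < D)
    (hint : ∀ v : Fin N → ℤ, ∃ m : ℤ,
      MvPolynomial.eval (fun i => ((v i : ℝ))) p = (m : ℝ) / (D : ℝ)) :
    ∃ ε > 0, ∀ v : Fin N → ℤ,
      (∃ g ∈ G, Real.sqrt (∑ i, ((g : Matrix (Fin N) (Fin N) ℝ).mulVec (fun i => ((v i : ℝ))) i) ^ 2)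
          ≤ ε) →
      MvPolynomial.eval (fun i => ((v i : ℝ))) p = 0 := by
  have hcont : Continuous fun x : Fin N → ℝ => MvPolynomial.eval x p :=
    MvPolynomial.continuous_eval p
  have hDpos : (0 : ℝ) < 1 / D := by positivity
  have hca : ContinuousAt (fun x : Fin N → ℝ => MvPolynomial.eval x p) 0 := hcont.continuousAt
  rw [Metric.continuousAt_iff] at hca
  obtain ⟨δ, hδ, hball⟩ := hca (1 / D) hDpos
  refine ⟨δ / 2, by positivity, fun v ⟨g, hg, hnorm⟩ => ?_⟩
  set w : Fin N → ℝ := (g : Matrix (Fin N) (Fin N) ℝ).mulVec (fun i => ((v i : ℝ))) with hw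
  have hwd : dist w 0 < δ := by
    rw [dist_pi_lt_iff hδ]
    intro i
    have h1 : |w i| ≤ Real.sqrt (∑ j, (w j) ^ 2) := by
      rw [← Real.sqrt_sq_eq_abs]
      exact Real.sqrt_le_sqrt (Finset.single_le_sum (f := fun j => (w j)^2)
        (fun j _ => sq_nonneg _) (Finset.mem_univ i))
    calc dist (w i) 0 = |w i| := by simp [Real.dist_eq]
      _ ≤ δ / 2 := h1.trans hnorm
      _ < δ := by linarith
  have hsmall : |MvPolynomial.eval w p| < 1 / D := by
    have h := hball hwd
    rw [hp0] at h
    simpa [Real.dist_eq] using h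
  rw [hinv g hg] at hsmall
  obtain ⟨m, hm⟩ := hint v
  rw [hm] at hsmall ⊢
  have hm0 : m = 0 := by
    by_contra h
    have h1 : (1 : ℝ) ≤ |(m : ℝ)| := by
      rw [← Int.cast_abs]
      exact_mod_cast Int.one_le_abs h
    rw [abs_div, abs_of_nonneg (by positivity : (0:ℝ) ≤ (D:ℝ))] at hsmall
    have hD' : (0:ℝ) < D := by exact_mod_cast hD
    rw [div_lt_div_iff₀ hD' hD'] at hsmall
    nlinarith
  simp [hm0]
end

section
/- Let G be a subgroup of GL_N(ℝ) and let 𝒜 be a finite set of polynomial functions ℝ^N → ℝ such that each f ∈ 𝒜 satisfies f(0) = 0, is G-invariant (f(g·v) = f(v) for all g ∈ G, v ∈ ℝ^N), and maps ℤ^N into (1/D)·ℤ for some positive integer D. Assume moreover that for every v ∈ ℤ^N, if f(v) = 0 for all f ∈ 𝒜 then 0 lies in the closure of the orbit G·v in ℝ^N. Then there exists ε > 0 such that every v ∈ ℤ^N with ‖g·v‖ ≤ ε for some g ∈ G satisfies 0 ∈ closure(G·v), i.e., v is unstable. (This is Corollary 5.4 of the paper, stated with the geometric-invariant-theoretic input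 of Mumford's theorems made into explicit hypotheses.) -/
theorem stmt8
    (N : ℕ) (G : Subgroup (Matrix.GeneralLinearGroup (Fin N) ℝ))
    (𝒜 : Finset (MvPolynomial (Fin N) ℝ))
    (h0 : ∀ f ∈ 𝒜, MvPolynomial.eval (0 : Fin N → ℝ) f = 0)
    (hinv : ∀ f ∈ 𝒜, ∀ g ∈ G, ∀ v : Fin N → ℝ,
      MvPolynomial.eval ((g : Matrix (Fin N) (Fin N) ℝ).mulVec v) f = MvPolynomial.eval v f)
    (hint : ∀ f ∈ 𝒜, ∃ D : ℕ, 0 < D ∧ ∀ v : Fin N → ℤ, ∃ m : ℤ,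
      MvPolynomial.eval (fun i => ((v i : ℝ))) f = (m : ℝ) / (D : ℝ))
    (htest : ∀ v : Fin N → ℤ,
      (∀ f ∈ 𝒜, MvPolynomial.eval (fun i => ((v i : ℝ))) f = 0) →
      (0 : Fin N → ℝ) ∈ closure
        {x : Fin N → ℝ | ∃ g ∈ G, x = (g : Matrix (Fin N) (Fin N) ℝ).mulVec fun i => ((v i : ℝ))}) :
    ∃ ε > 0, ∀ v : Fin N → ℤ,
      (∃ g ∈ G, Real.sqrt (∑ i, ((g : Matrix (Fin N) (Fin N) ℝ).mulVec (fun i => ((v i : ℝ))) i) ^ 2)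
          ≤ ε) →
      (0 : Fin N → ℝ) ∈ closure
        {x : Fin N → ℝ | ∃ g ∈ G, x = (g : Matrix (Fin N) (Fin N) ℝ).mulVec fun i => ((v i : ℝ))} := by
  classical
  choose D hDpos hDval using hint
  set F : (Fin N → ℝ) → ℝ := fun x =>
    ∑ f ∈ 𝒜.attach, ((D f f.2 : ℝ) * MvPolynomial.eval x (f : MvPolynomial (Fin N) ℝ)) ^ 2
    with hF
  have hFcont : Continuous F := by
    apply continuous_finset_sum
    intro f _
    exact (continuous_const.mul (MvPolynomial.continuous_eval _)).pow 2
  have hF0 : F 0 = 0 := by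
    apply Finset.sum_eq_zero
    intro f _
    rw [h0 f f.2]
    ring
  have hcont : ContinuousAt F 0 := hFcont.continuousAt
  rw [Metric.continuousAt_iff] at hcont
  obtain ⟨δ, hδpos, hδ⟩ := hcont 1 one_pos
  refine ⟨δ / 2, by positivity, ?_⟩
  intro v ⟨g, hg, hgnorm⟩
  apply htest
  intro f hf
  -- the vector g • v is close to 0
  set w := (g : Matrix (Fin N) (Fin N) ℝ).mulVec fun i => ((v i : ℝ)) with hw
  have hwnorm : dist w 0 < δ := by
    rw [dist_zero_right]
    have h1 : ‖w‖ ≤ δ / 2 := by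
      apply pi_norm_le_iff_of_nonneg (by positivity) |>.2
      intro i
      refine le_trans ?_ hgnorm
      rw [Real.norm_eq_abs, ← Real.sqrt_sq_eq_abs]
      apply Real.sqrt_le_sqrt
      exact Finset.single_le_sum (f := fun j => (w j) ^ 2)
        (fun j _ => sq_nonneg _) (Finset.mem_univ i)
    linarith
  have hFw : F w < 1 := by
    have := hδ hwnorm
    rw [dist_eq_norm, hF0, sub_zero, Real.norm_eq_abs] at this
    exact lt_of_le_of_lt (le_abs_self _) this
  -- extract the single term
  have hterm : ((D f hf : ℝ) * MvPolynomial.eval w f) ^ 2 < 1 := by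
    refine lt_of_le_of_lt ?_ hFw
    exact Finset.single_le_sum
      (f := fun f : 𝒜 => ((D f f.2 : ℝ) * MvPolynomial.eval w (f : MvPolynomial (Fin N) ℝ)) ^ 2)
      (fun _ _ => sq_nonneg _) (Finset.mem_attach 𝒜 ⟨f, hf⟩)
  rw [hw, hinv f hf g hg] at hterm
  obtain ⟨m, hm⟩ := hDval f hf v
  rw [hm] at hterm
  have hDne : ((D f hf : ℝ)) ≠ 0 := Nat.cast_ne_zero.2 (hDpos f hf).ne'
  rw [mul_div_cancel₀ _ hDne] at hterm
  have hm0 : m = 0 := by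
    have : (m : ℝ) ^ 2 < 1 := hterm
    by_contra hne
    have : (1 : ℝ) ≤ (m : ℝ) ^ 2 := by
      have : (1 : ℤ) ≤ m ^ 2 := by
        rcases lt_or_gt_of_ne hne with h | h
        · nlinarith
        · nlinarith
      exact_mod_cast this
    linarith
  rw [hm, hm0]
  simp
end
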